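/- arXiv:1304.5274 — 3 statements merged into one kernel-verified Lean document; each statement's English description precedes it below -/
import Mathlib

section
/- For every real l ≥ −1/2 and every z ∈ ℂ, the function x ↦ ξ_l(z,x) is twice differentiable on (0,∞) and satisfies the differential equation −ξ_l''(z,x) + (l(l+1)/x²)·ξ_l(z,x) = z·ξ_l(z,x) for all x > 0, where primes denote derivatives with respect to x. -/
open MeasureTheory Filter Set

/-- The entire part of the regular solution of the unperturbed Bessel equation:
`g_l(z,x) = ∑_{k=0}^∞ (-z x²/4)^k / (k! Γ(l+k+3/2))`. -/
noncomputable def besselG (l : ℝ) (z : ℂ) (x : ℝ) : ℂ :=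
  ∑' k : ℕ, (-z * (x : ℂ) ^ 2 / 4) ^ k /
    ((Nat.factorial k : ℂ) * (Real.Gamma (l + k + 3 / 2) : ℂ))

/-- The regular solution `ξ_l(z,x) = √π (x/2)^{l+1} g_l(z,x)`. -/
noncomputable def besselXi (l : ℝ) (z : ℂ) (x : ℝ) : ℂ :=
  (Real.sqrt Real.pi : ℂ) * (((x / 2) ^ (l + 1) : ℝ) : ℂ) * besselG l z x


open FormalMultilinearSeries

noncomputable def bc (l : ℝ) : ℕ → ℂ := fun k =>
  (-1/4 : ℂ) ^ k / ((Nat.factorial k : ℂ) * (Real.Gamma (l + k + 3 / 2) : ℂ))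

lemma gamma_pos (l : ℝ) (hl : -1/2 ≤ l) (k : ℕ) : 0 < Real.Gamma (l + k + 3/2) := by
  apply Real.Gamma_pos_of_pos; have : (0:ℝ) ≤ k := Nat.cast_nonneg k; linarith

lemma bc_ne (l : ℝ) (hl : -1/2 ≤ l) (k : ℕ) : bc l k ≠ 0 := by
  have h1 := (gamma_pos l hl k).ne'
  simp only [bc]
  apply div_ne_zero
  · apply pow_ne_zero; norm_num
  · simp [Nat.factorial_ne_zero, h1, Complex.ofReal_eq_zero]

lemma bc_rec (l : ℝ) (hl : -1/2 ≤ l) (k : ℕ) :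
    bc l (k+1) * (4 * ((k:ℂ)+1) * ((l:ℂ) + k + 3/2)) = -bc l k := by
  have hpos : (0:ℝ) < l + k + 3/2 := by
    have : (0:ℝ) ≤ k := Nat.cast_nonneg k; linarith
  have hkC : ((k:ℂ)+1) ≠ 0 := Nat.cast_add_one_ne_zero k
  have hlC : ((l:ℂ) + k + 3/2) ≠ 0 := by
    have : ((l:ℂ) + k + 3/2) = ((l + k + 3/2 : ℝ) : ℂ) := by push_cast; ring
    rw [this]
    exact_mod_cast Complex.ofReal_ne_zero.mpr hpos.ne'
  have hΓ : ((Real.Gamma (l + (k+1:ℕ) + 3/2) : ℝ) : ℂ)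
      = ((l:ℂ) + k + 3/2) * ((Real.Gamma (l + k + 3/2) : ℝ) : ℂ) := by
    have h2 : (l + (k+1:ℕ) + 3/2 : ℝ) = (l + k + 3/2) + 1 := by push_cast; ring
    rw [h2, Real.Gamma_add_one hpos.ne']
    push_cast; ring
  have hfac : (Nat.factorial (k+1) : ℂ) = ((k:ℂ)+1) * (Nat.factorial k : ℂ) := by
    push_cast [Nat.factorial_succ]; ring
  have e1 : bc l (k+1) = bc l k * ((-1/4) / (((k:ℂ)+1) * ((l:ℂ)+k+3/2))) := by
    simp only [bc, div_mul_div_comm, pow_succ]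
    congr 1
    rw [hfac, hΓ]
    ring
  have h2 : (-1/4 : ℂ) / (((k:ℂ)+1) * ((l:ℂ)+k+3/2)) * (4 * ((k:ℂ)+1) * ((l:ℂ)+k+3/2)) = -1 := by
    rw [div_mul_eq_mul_div, div_eq_iff (mul_ne_zero hkC hlC)]; ring
  rw [e1, mul_assoc, h2, mul_neg_one]

noncomputable def pS (l : ℝ) : FormalMultilinearSeries ℂ ℂ ℂ := ofScalars ℂ (bc l)

lemma pS_radius (l : ℝ) (hl : -1/2 ≤ l) : (pS l).radius = ⊤ := by
  apply ofScalars_radius_eq_top_of_tendsto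
  · exact Eventually.of_forall (bc_ne l hl)
  · have key : ∀ n : ℕ, ‖bc l n.succ‖ / ‖bc l n‖ ≤ 1 / (n+1 : ℝ) := by
      intro n
      have hn1 : (0:ℝ) < (n:ℝ) + 1 := by positivity
      have hpos : (0:ℝ) < l + n + 3/2 := by
        have : (0:ℝ) ≤ n := Nat.cast_nonneg n; linarith
      have hD : (0:ℝ) < 4*((n:ℝ)+1)*(l+n+3/2) := by positivity
      have hcast : (4*((n:ℂ)+1)*((l:ℂ)+n+3/2)) = ((4*((n:ℝ)+1)*(l+n+3/2) : ℝ) : ℂ) := by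
        push_cast; ring
      have h3 : ‖bc l (n+1)‖ * (4*((n:ℝ)+1)*(l+n+3/2)) = ‖bc l n‖ := by
        have := congrArg norm (bc_rec l hl n)
        rwa [norm_mul, norm_neg, hcast, Complex.norm_real, Real.norm_eq_abs,
          abs_of_pos hD] at this
      have hb : 0 < ‖bc l (n+1)‖ := norm_pos_iff.mpr (bc_ne l hl (n+1))
      have h4 : ‖bc l n.succ‖ / ‖bc l n‖ = 1 / (4*((n:ℝ)+1)*(l+n+3/2)) := by
        rw [Nat.succ_eq_add_one, ← h3]
        field_simp
      rw [h4]
      apply one_div_le_one_div_of_le hn1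
      nlinarith
    have h0 : ∀ n : ℕ, 0 ≤ ‖bc l n.succ‖ / ‖bc l n‖ :=
      fun n => div_nonneg (norm_nonneg _) (norm_nonneg _)
    exact squeeze_zero h0 key tendsto_one_div_add_atTop_nhds_zero_nat

noncomputable def gF (l : ℝ) : ℂ → ℂ := (pS l).sum
noncomputable def gF1 (l : ℝ) : ℂ → ℂ := fun u => deriv (gF l) u
noncomputable def gF2 (l : ℝ) : ℂ → ℂ := fun u => deriv (fderiv ℂ (gF l)) u 1

section core
variable (l : ℝ) (hl : -1/2 ≤ l)
include hl

lemma hball : HasFPowerSeriesOnBall (gF l) (pS l) 0 ⊤ := by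
  have h := (pS l).hasFPowerSeriesOnBall (F := ℂ) (by rw [pS_radius l hl]; exact ENNReal.zero_lt_top)
  rwa [pS_radius l hl] at h

lemma hball1 : HasFPowerSeriesOnBall (fderiv ℂ (gF l)) (pS l).derivSeries 0 ⊤ :=
  (hball l hl).fderiv

lemma hball2 : HasFPowerSeriesOnBall (𝕜 := ℂ) (fderiv ℂ (fderiv ℂ (gF l)))
    (pS l).derivSeries.derivSeries 0 ⊤ :=
  (hball1 l hl).fderiv

lemma gdiff : ∀ u, DifferentiableAt ℂ (gF l) u :=
  fun u => ((hball l hl).analyticAt_of_mem (by simp)).differentiableAt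

lemma gdiff1 : ∀ u, DifferentiableAt ℂ (fderiv ℂ (gF l)) u :=
  fun u => ((hball1 l hl).analyticAt_of_mem (by simp)).differentiableAt

lemma hd : ∀ u, HasDerivAt (gF l) (gF1 l u) u := fun u => (gdiff l hl u).hasDerivAt

lemma hd1 : ∀ u, HasDerivAt (gF1 l) (gF2 l u) u := by
  intro u
  have h1 : HasDerivAt (fderiv ℂ (gF l)) (deriv (fderiv ℂ (gF l)) u) u :=
    (gdiff1 l hl u).hasDerivAt
  have h2 := h1.clm_apply (hasDerivAt_const u (1:ℂ))
  simp only [map_zero, add_zero] at h2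
  have : gF1 l = fun w => fderiv ℂ (gF l) w 1 := by
    funext w; rfl
  rw [this]
  exact h2

omit hl in
lemma clm_eq (M : Type*) [NormedAddCommGroup M] [NormedSpace ℂ M]
    (L : ℂ →L[ℂ] M) (w : ℂ) : L w = w • L 1 := by
  have : L w = L (w • 1) := by rw [smul_eq_mul, mul_one]
  rw [this, L.map_smul]

lemma gsum (u : ℂ) : HasSum (fun n : ℕ => bc l n * u^n) (gF l u) := by
  have h := (hball l hl).hasSum (y := u) (by simp)
  simp only [zero_add] at h
  convert h using 2 with n
  · rfl
  rw [pS, ofScalars_apply_eq, smul_eq_mul]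

lemma gsum1 (u : ℂ) :
    HasSum (fun n : ℕ => ((n:ℂ)+1) * bc l (n+1) * u^(n+1)) (u * gF1 l u) := by
  have h := ((hball1 l hl).hasSum (y := u) (by simp)).mapL (ContinuousLinearMap.apply ℂ ℂ u)
  simp only [zero_add, ContinuousLinearMap.apply_apply] at h
  have h2 : fderiv ℂ (gF l) u u = u * gF1 l u := by
    rw [clm_eq ℂ (fderiv ℂ (gF l) u) u, smul_eq_mul]; rfl
  rw [h2] at h
  convert h using 2 with n
  · rfl
  rw [derivSeries_apply_diag, pS, ofScalars_apply_eq, nsmul_eq_mul, smul_eq_mul]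
  push_cast
  ring

lemma gsum2 (u : ℂ) :
    HasSum (fun n : ℕ => ((n:ℂ)+1) * ((n:ℂ)+2) * bc l (n+2) * u^(n+2)) (u^2 * gF2 l u) := by
  have h := (((hball2 l hl).hasSum (y := u) (by simp)).mapL
      (ContinuousLinearMap.apply ℂ (ℂ →L[ℂ] ℂ) u)).mapL (ContinuousLinearMap.apply ℂ ℂ u)
  simp only [zero_add, ContinuousLinearMap.apply_apply] at h
  have h2 : fderiv ℂ (fderiv ℂ (gF l)) u u u = u^2 * gF2 l u := by
    rw [clm_eq _ (fderiv ℂ (fderiv ℂ (gF l)) u) u, ContinuousLinearMap.smul_apply,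
      clm_eq ℂ (fderiv ℂ (fderiv ℂ (gF l)) u 1) u]
    simp only [smul_eq_mul, gF2]
    ring_nf
    rfl
  rw [h2] at h
  convert h using 2 with n
  · rfl
  rw [derivSeries_apply_diag]
  rw [ContinuousLinearMap.smul_apply, derivSeries_apply_diag, pS, ofScalars_apply_eq,
    nsmul_eq_mul, nsmul_eq_mul, smul_eq_mul]
  push_cast
  ring

lemma ode (u : ℂ) : 4*u^2*gF2 l u + (4*(l:ℂ)+6)*(u*gF1 l u) + u*gF l u = 0 := by
  set A : ℕ → ℂ := fun n : ℕ => 4 * (((n:ℂ)+1) * ((n:ℂ)+2) * bc l (n+2) * u^(n+2)) with hAdef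
  set B : ℕ → ℂ := fun n : ℕ => (4*(l:ℂ)+6) * (((n:ℂ)+1) * bc l (n+1) * u^(n+1)) with hBdef
  set C : ℕ → ℂ := fun n : ℕ => u * (bc l n * u^n) with hCdef
  have hA : HasSum A (4 * (u^2 * gF2 l u)) := (gsum2 l hl u).mul_left 4
  have hB : HasSum B ((4*(l:ℂ)+6) * (u * gF1 l u)) := (gsum1 l hl u).mul_left _
  have hC : HasSum C (u * gF l u) := (gsum l hl u).mul_left u
  have hB' : HasSum (fun n : ℕ => B (n+1)) ((4*(l:ℂ)+6) * (u * gF1 l u) - B 0) := by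
    refine (hasSum_nat_add_iff (f := B) 1).2 ?_
    simpa using hB
  have hC' : HasSum (fun n : ℕ => C (n+1)) (u * gF l u - C 0) := by
    refine (hasSum_nat_add_iff (f := C) 1).2 ?_
    simpa using hC
  have htot := hA.add (hB'.add hC')
  have hzero : (fun n : ℕ => A n + (B (n+1) + C (n+1))) = fun _ => (0:ℂ) := by
    funext n
    have hrec := bc_rec l hl (n+1)
    have e : n+1+1 = n+2 := rfl
    rw [e] at hrec
    push_cast at hrec
    simp only [hAdef, hBdef, hCdef]
    push_cast
    linear_combination u^(n+2) * hrec
  rw [hzero] at htot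
  have h0 : HasSum (fun _ : ℕ => (0:ℂ)) 0 := hasSum_zero
  have hval := h0.unique htot
  have hBC : B 0 + C 0 = 0 := by
    have hrec := bc_rec l hl 0
    simp only [hBdef, hCdef]
    push_cast at hrec ⊢
    linear_combination u * hrec
  linear_combination -hval + hBC

end core

section calc2
variable (l : ℝ) (hl : -1/2 ≤ l) (z : ℂ)


include hl in
lemma hfD (x : ℝ) :
    HasDerivAt (fun t : ℝ => gF l (z * (t:ℂ)^2)) (2*z*(x:ℂ) * gF1 l (z*(x:ℂ)^2)) x := by
  have hinner : HasDerivAt (fun t : ℝ => z * (t:ℂ)^2) (z * (2*(x:ℂ))) x := by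
    have h1 : HasDerivAt (fun w : ℂ => w^2) (2*(x:ℂ)) (x:ℂ) := by
      simpa using hasDerivAt_pow 2 (x:ℂ)
    exact (h1.comp_ofReal).const_mul z
  have h2 : HasDerivAt ((gF l) ∘ (fun t : ℝ => z * (t:ℂ)^2))
      ((z * (2*(x:ℂ))) • gF1 l (z*(x:ℂ)^2)) x :=
    (hd l hl (z*(x:ℂ)^2)).scomp x hinner
  simp only [Function.comp_def, smul_eq_mul] at h2
  convert h2 using 1
  ring

include hl in
lemma hf1D (x : ℝ) :
    HasDerivAt (fun t : ℝ => gF1 l (z * (t:ℂ)^2)) (2*z*(x:ℂ) * gF2 l (z*(x:ℂ)^2)) x := by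
  have hinner : HasDerivAt (fun t : ℝ => z * (t:ℂ)^2) (z * (2*(x:ℂ))) x := by
    have h1 : HasDerivAt (fun w : ℂ => w^2) (2*(x:ℂ)) (x:ℂ) := by
      simpa using hasDerivAt_pow 2 (x:ℂ)
    exact (h1.comp_ofReal).const_mul z
  have h2 : HasDerivAt ((gF1 l) ∘ (fun t : ℝ => z * (t:ℂ)^2))
      ((z * (2*(x:ℂ))) • gF2 l (z*(x:ℂ)^2)) x :=
    (hd1 l hl (z*(x:ℂ)^2)).scomp x hinner
  simp only [Function.comp_def, smul_eq_mul] at h2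
  convert h2 using 1
  ring

lemma hRD (x : ℝ) (hx : 0 < x) :
    HasDerivAt (fun t : ℝ => (t/2)^(l+1)) ((l+1)/2 * (x/2)^l) x := by
  have houter : HasDerivAt (fun y : ℝ => y^(l+1)) ((l+1) * (x/2)^(l+1-1)) (x/2) :=
    Real.hasDerivAt_rpow_const (Or.inl (by positivity))
  have hinner : HasDerivAt (fun t : ℝ => t/2) (1/2) x := by
    simpa using (hasDerivAt_id x).div_const 2
  have h2 := houter.comp x hinner
  simp only [Function.comp_def] at h2
  convert h2 using 1
  · rfl
  · rfl
  rw [show l+1-1 = l by ring]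
  ring

lemma hRlD (x : ℝ) (hx : 0 < x) :
    HasDerivAt (fun t : ℝ => (l+1)/2 * (t/2)^l) ((l+1)/2 * (l * (x/2)^(l-1) / 2)) x := by
  have houter : HasDerivAt (fun y : ℝ => y^l) (l * (x/2)^(l-1)) (x/2) :=
    Real.hasDerivAt_rpow_const (Or.inl (by positivity))
  have hinner : HasDerivAt (fun t : ℝ => t/2) (1/2) x := by
    simpa using (hasDerivAt_id x).div_const 2
  have h2 := (houter.comp x hinner).const_mul ((l+1)/2)
  simp only [Function.comp_def] at h2
  convert h2 using 1
  · rfl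
  · rfl
  ring

noncomputable def CC : ℂ := (Real.sqrt Real.pi : ℂ)

noncomputable def Xi0 (l : ℝ) (z : ℂ) : ℝ → ℂ :=
  fun t => CC * (((t/2) ^ (l+1) : ℝ) : ℂ) * gF l (z * (t:ℂ)^2)

noncomputable def Xi1 (l : ℝ) (z : ℂ) : ℝ → ℂ :=
  fun t => CC * (((l+1)/2 * (t/2)^l : ℝ) : ℂ) * gF l (z * (t:ℂ)^2)
    + CC * (((t/2)^(l+1) : ℝ) : ℂ) * (2*z*(t:ℂ)*gF1 l (z*(t:ℂ)^2))

noncomputable def Xi2 (l : ℝ) (z : ℂ) : ℝ → ℂ := fun x =>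
  (CC * (((l+1)/2 * (l * (x/2)^(l-1) / 2) : ℝ) : ℂ) * gF l (z*(x:ℂ)^2)
    + CC * (((l+1)/2 * (x/2)^l : ℝ) : ℂ) * (2*z*(x:ℂ)*gF1 l (z*(x:ℂ)^2)))
  + (CC * (((l+1)/2 * (x/2)^l : ℝ) : ℂ) * (2*z*(x:ℂ)*gF1 l (z*(x:ℂ)^2))
    + CC * (((x/2)^(l+1) : ℝ) : ℂ)
        * (2*z*gF1 l (z*(x:ℂ)^2) + 2*z*(x:ℂ)*(2*z*(x:ℂ)*gF2 l (z*(x:ℂ)^2))))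

include hl in
lemma hXi0D (x : ℝ) (hx : 0 < x) : HasDerivAt (Xi0 l z) (Xi1 l z x) x := by
  have hCR : HasDerivAt (fun t : ℝ => CC * (((t/2)^(l+1) : ℝ) : ℂ))
      (CC * (((l+1)/2 * (x/2)^l : ℝ) : ℂ)) x :=
    ((hRD l x hx).ofReal_comp).const_mul CC
  have h := hCR.mul (hfD l hl z x)
  convert h using 1
  all_goals rfl

include hl in
lemma hXi1D (x : ℝ) (hx : 0 < x) : HasDerivAt (Xi1 l z) (Xi2 l z x) x := by
  have hCRl : HasDerivAt (fun t : ℝ => CC * (((l+1)/2 * (t/2)^l : ℝ) : ℂ))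
      (CC * (((l+1)/2 * (l * (x/2)^(l-1) / 2) : ℝ) : ℂ)) x :=
    ((hRlD l x hx).ofReal_comp).const_mul CC
  have hCR : HasDerivAt (fun t : ℝ => CC * (((t/2)^(l+1) : ℝ) : ℂ))
      (CC * (((l+1)/2 * (x/2)^l : ℝ) : ℂ)) x :=
    ((hRD l x hx).ofReal_comp).const_mul CC
  have h2z : HasDerivAt (fun t : ℝ => 2*z*(t:ℂ)) (2*z) x := by
    have := ((hasDerivAt_id x).ofReal_comp).const_mul (2*z)
    simpa using this
  have hprod : HasDerivAt (fun t : ℝ => 2*z*(t:ℂ)*gF1 l (z*(t:ℂ)^2))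
      (2*z*gF1 l (z*(x:ℂ)^2) + 2*z*(x:ℂ)*(2*z*(x:ℂ)*gF2 l (z*(x:ℂ)^2))) x := by
    have h := h2z.mul (hf1D l hl z x)
    convert h using 1
    all_goals rfl
  have hT1 := hCRl.mul (hfD l hl z x)
  have hT2 := hCR.mul hprod
  have h := hT1.add hT2
  convert h using 1
  all_goals rfl

end calc2

lemma besselG_eq (l : ℝ) (hl : -1/2 ≤ l) (z : ℂ) (x : ℝ) :
    besselG l z x = gF l (z * (x:ℂ)^2) := by
  rw [besselG, ← (gsum l hl (z * (x:ℂ)^2)).tsum_eq]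
  apply tsum_congr
  intro k
  rw [bc, div_mul_eq_mul_div]
  congr 1
  rw [← mul_pow]
  congr 1
  ring

lemma besselXi_eq (l : ℝ) (hl : -1/2 ≤ l) (z : ℂ) :
    (fun t : ℝ => besselXi l z t) = Xi0 l z := by
  funext t
  rw [besselXi, besselG_eq l hl z t, Xi0, CC]

/-- For every `l ≥ -1/2` and `z ∈ ℂ`, the function `x ↦ ξ_l(z,x)` is twice
differentiable on `(0,∞)` and satisfies `-ξ_l'' + (l(l+1)/x²) ξ_l = z ξ_l`. -/
theorem statement3 (l : ℝ) (hl : -1/2 ≤ l) (z : ℂ) :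
    ∀ x : ℝ, 0 < x →
      DifferentiableAt ℝ (fun t : ℝ => besselXi l z t) x ∧
      DifferentiableAt ℝ (deriv (fun t : ℝ => besselXi l z t)) x ∧
      -(deriv (deriv (fun t : ℝ => besselXi l z t)) x)
          + ((l : ℂ) * ((l : ℂ) + 1) / (x : ℂ) ^ 2) * besselXi l z x
        = z * besselXi l z x := by
  intro x hx
  rw [besselXi_eq l hl z]
  have hev : deriv (Xi0 l z) =ᶠ[nhds x] Xi1 l z :=
    Filter.eventuallyEq_of_mem (Ioi_mem_nhds hx)
      (fun t ht => (hXi0D l hl z t ht).deriv)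
  have hdd : HasDerivAt (deriv (Xi0 l z)) (Xi2 l z x) x :=
    (hXi1D l hl z x hx).congr_of_eventuallyEq hev
  refine ⟨(hXi0D l hl z x hx).differentiableAt, hdd.differentiableAt, ?_⟩
  rw [hdd.deriv]
  rw [besselXi, besselG_eq l hl z x]
  -- now pure algebra
  have hx0 : ((x:ℝ):ℂ) ≠ 0 := by
    exact_mod_cast Complex.ofReal_ne_zero.mpr hx.ne'
  have hs : (0:ℝ) < x/2 := by positivity
  have h' : 4*z^2*(x:ℂ)^2*gF2 l (z*(x:ℂ)^2) + (4*(l:ℂ)+6)*(z*gF1 l (z*(x:ℂ)^2))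
      + z*gF l (z*(x:ℂ)^2) = 0 := by
    apply mul_left_cancel₀ (pow_ne_zero 2 hx0)
    rw [mul_zero]
    linear_combination ode l hl (z*(x:ℂ)^2)
  have e1 : ((x/2)^l : ℝ) = (x/2)^(l-1) * (x/2) := by
    have h := Real.rpow_add_one hs.ne' (l-1)
    rwa [show l-1+1 = l by ring] at h
  have e2 : ((x/2)^(l+1) : ℝ) = (x/2)^(l-1) * (x/2) * (x/2) := by
    rw [Real.rpow_add_one hs.ne' l, e1]
  simp only [Xi2, CC, e1, e2]
  push_cast
  field_simp
  linear_combination (-(x:ℂ)^2 * (((x/2)^(l-1) : ℝ) : ℂ)) * h'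
end

section
/- For every real l ≥ −1/2 and every z ∈ ℂ, the function ξ_l(z,·) satisfies the boundary condition at the left endpoint: lim_{x→0⁺} x^l·[ (l+1)·ξ_l(z,x) − x·∂ξ_l/∂x (z,x) ] = 0. -/
open MeasureTheory Filter Set

lemma statement4_gamma_lb {l : ℝ} (hl : -1/2 ≤ l) (k : ℕ) :
    Real.Gamma (l + 3 / 2) ≤ Real.Gamma (l + k + 3 / 2) := by
  induction k with
  | zero => simp
  | succ n ih =>
    have h1 : (1 : ℝ) ≤ l + n + 3 / 2 := by
      have : (0:ℝ) ≤ (n:ℝ) := Nat.cast_nonneg n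
      linarith
    have h0 : l + (n : ℝ) + 3 / 2 ≠ 0 := by linarith
    have heq : l + ((n : ℕ) + 1 : ℕ) + 3 / 2 = (l + n + 3 / 2) + 1 := by
      push_cast; ring
    rw [heq, Real.Gamma_add_one h0]
    have hpos : 0 < Real.Gamma (l + n + 3 / 2) := Real.Gamma_pos_of_pos (by linarith)
    nlinarith

/-- For every `l ≥ -1/2` and `z ∈ ℂ`, the boundary condition at the left
endpoint holds: `lim_{x→0⁺} x^l [ (l+1) ξ_l(z,x) - x ∂ξ_l/∂x(z,x) ] = 0`. -/
theorem statement4 (l : ℝ) (hl : -1/2 ≤ l) (z : ℂ) :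
    Tendsto (fun x : ℝ => ((x ^ l : ℝ) : ℂ) *
        (((l : ℂ) + 1) * besselXi l z x
          - (x : ℂ) * deriv (fun t : ℝ => besselXi l z t) x))
      (nhdsWithin 0 (Set.Ioi 0)) (nhds 0) := by
  set c : ℕ → ℂ := fun k =>
    (-z / 4) ^ k / ((Nat.factorial k : ℂ) * (Real.Gamma (l + k + 3 / 2) : ℂ)) with hc
  set p : FormalMultilinearSeries ℂ ℂ ℂ := FormalMultilinearSeries.ofScalars ℂ c with hp
  set F : ℂ → ℂ := p.sum with hF
  have hΓpos : 0 < Real.Gamma (l + 3 / 2) := Real.Gamma_pos_of_pos (by linarith)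
  -- norm bound on coefficients
  have hnorm : ∀ k : ℕ, ‖c k‖ ≤ (‖z‖ / 4) ^ k / (Nat.factorial k) * (Real.Gamma (l + 3 / 2))⁻¹ := by
    intro k
    have hΓk : 0 < Real.Gamma (l + k + 3 / 2) :=
      Real.Gamma_pos_of_pos (by have : (0:ℝ) ≤ (k:ℝ) := Nat.cast_nonneg k; linarith)
    have h1 : ‖c k‖ = (‖z‖ / 4) ^ k / ((Nat.factorial k) * Real.Gamma (l + k + 3 / 2)) := by
      rw [hc]
      simp only [norm_div, norm_pow, norm_neg, norm_mul, Complex.norm_natCast,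
        Complex.norm_real, Real.norm_eq_abs, abs_of_pos hΓk]
      norm_num
    rw [h1, div_mul_eq_div_div, ← div_eq_mul_inv]
    gcongr
    exact statement4_gamma_lb hl k
  -- radius is infinite
  have hrad : p.radius = ⊤ := by
    apply p.radius_eq_top_of_summable_norm
    intro r
    have hb : ∀ n : ℕ, ‖p n‖ * (r : ℝ) ^ n ≤
        (‖z‖ / 4 * r) ^ n / (Nat.factorial n) * (Real.Gamma (l + 3 / 2))⁻¹ := by
      intro n
      rw [hp, FormalMultilinearSeries.ofScalars_norm]
      calc ‖c n‖ * (r : ℝ) ^ n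
          ≤ ((‖z‖ / 4) ^ n / (Nat.factorial n) * (Real.Gamma (l + 3 / 2))⁻¹) * (r : ℝ) ^ n := by
            gcongr; exact hnorm n
        _ = (‖z‖ / 4 * r) ^ n / (Nat.factorial n) * (Real.Gamma (l + 3 / 2))⁻¹ := by
            rw [mul_pow]; ring
    refine Summable.of_nonneg_of_le (fun n => by positivity) hb ?_
    exact (Real.summable_pow_div_factorial (‖z‖ / 4 * r)).mul_right _
  have hball : HasFPowerSeriesOnBall F p 0 ⊤ := by
    rw [← hrad]
    exact p.hasFPowerSeriesOnBall (by rw [hrad]; exact ENNReal.zero_lt_top)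
  have hFanal : AnalyticOnNhd ℂ F univ := by
    intro w _
    exact hball.analyticAt_of_mem (by simp [EMetric.mem_ball, edist_lt_top])
  have hF'anal : AnalyticOnNhd ℂ (deriv F) univ := hFanal.deriv
  have hcontF' : ContinuousAt (deriv F) 0 := (hF'anal 0 trivial).continuousAt
  -- besselG equals F ∘ square
  have hFx : ∀ w : ℂ, F w = ∑' n : ℕ, c n • w ^ n := fun w =>
    FormalMultilinearSeries.ofScalars_sum_eq c w
  have hGeq : ∀ x : ℝ, besselG l z x = F ((x : ℂ) ^ 2) := by
    intro x
    rw [hFx, besselG]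
    refine tsum_congr fun k => ?_
    rw [smul_eq_mul, hc]
    rw [div_mul_eq_mul_div, ← mul_pow]
    congr 2
    ring
  have hXiEq : besselXi l z =
      fun t : ℝ => (Real.sqrt Real.pi : ℂ) * (((t / 2) ^ (l + 1) : ℝ) : ℂ) * F ((t : ℂ) ^ 2) := by
    funext t
    rw [besselXi, hGeq]
  -- the eventual equality
  apply Tendsto.congr' (f₁ := fun x : ℝ =>
      ((x ^ l * (x / 2) ^ (l + 1) * x ^ 2 : ℝ) : ℂ) *
        ((-2 * (Real.sqrt Real.pi : ℂ)) * deriv F ((x : ℂ) ^ 2)))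
  · filter_upwards [self_mem_nhdsWithin] with x (hx : 0 < x)
    have hx2 : x / 2 ≠ 0 := by positivity
    -- derivative of the radial factor
    have hr : HasDerivAt (fun t : ℝ => (t / 2) ^ (l + 1)) ((l + 1) * (x / 2) ^ l * 2⁻¹) x := by
      have h1 : HasDerivAt (fun y : ℝ => y ^ (l + 1))
          ((l + 1) * (x / 2) ^ (l + 1 - 1)) (x / 2) :=
        Real.hasDerivAt_rpow_const (Or.inl hx2)
      have h2 : HasDerivAt (fun t : ℝ => t / 2) 2⁻¹ x := by
        simpa using (hasDerivAt_id x).div_const 2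
      have := h1.comp x h2
      simpa [add_sub_cancel_right, Function.comp_def] using this
    have hrC : HasDerivAt (fun t : ℝ => (((t / 2) ^ (l + 1) : ℝ) : ℂ))
        (((l + 1) * (x / 2) ^ l * 2⁻¹ : ℝ) : ℂ) x := hr.ofReal_comp
    have hFd : HasDerivAt F (deriv F ((x : ℂ) ^ 2)) ((x : ℂ) ^ 2) :=
      ((hFanal _ trivial).differentiableAt).hasDerivAt
    have hsq : HasDerivAt (fun w : ℂ => w ^ 2) (2 * (x : ℂ)) (x : ℂ) := by
      simpa using hasDerivAt_pow 2 ((x : ℂ))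
    have hcomp : HasDerivAt (fun w : ℂ => F (w ^ 2))
        (deriv F ((x : ℂ) ^ 2) * (2 * (x : ℂ))) (x : ℂ) := by
      have := HasDerivAt.comp (x : ℂ) hFd hsq; exact this
    have hGx : HasDerivAt (fun t : ℝ => F ((t : ℂ) ^ 2))
        (deriv F ((x : ℂ) ^ 2) * (2 * (x : ℂ))) x := hcomp.comp_ofReal
    have hXi : HasDerivAt
        (fun t : ℝ => (Real.sqrt Real.pi : ℂ) * (((t / 2) ^ (l + 1) : ℝ) : ℂ) * F ((t : ℂ) ^ 2))
        ((Real.sqrt Real.pi : ℂ) *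
          ((((l + 1) * (x / 2) ^ l * 2⁻¹ : ℝ) : ℂ) * F ((x : ℂ) ^ 2) +
            (((x / 2) ^ (l + 1) : ℝ) : ℂ) * (deriv F ((x : ℂ) ^ 2) * (2 * (x : ℂ))))) x := by
      have := (hrC.mul hGx).const_mul (Real.sqrt Real.pi : ℂ)
      simpa [mul_assoc] using this
    simp only [hXiEq]
    rw [hXi.deriv]
    -- now an algebraic identity
    have hkey : ((x / 2) ^ (l + 1) : ℝ) = (x / 2) ^ l * (x / 2) := Real.rpow_add_one hx2 l
    rw [hkey]
    push_cast
    ring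
  · -- the limit of the explicit form
    have hreal : Tendsto (fun x : ℝ => x ^ l * (x / 2) ^ (l + 1) * x ^ 2)
        (nhdsWithin 0 (Set.Ioi 0)) (nhds 0) := by
      have hcongr : ∀ x ∈ Set.Ioi (0:ℝ),
          x ^ l * (x / 2) ^ (l + 1) * x ^ 2 = x ^ (2 * l + 3) / 2 ^ (l + 1) := by
        intro x (hx : 0 < x)
        rw [Real.div_rpow hx.le (by norm_num : (0:ℝ) ≤ 2)]
        rw [show x ^ l * (x ^ (l + 1) / 2 ^ (l + 1)) * x ^ 2
            = x ^ l * x ^ (l + 1) * x ^ 2 / 2 ^ (l + 1) by ring]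
        rw [← Real.rpow_natCast x 2, ← Real.rpow_add hx, ← Real.rpow_add hx]
        norm_num
        ring_nf
      have hmain : Tendsto (fun x : ℝ => x ^ (2 * l + 3) / 2 ^ (l + 1))
          (nhdsWithin 0 (Set.Ioi 0)) (nhds 0) := by
        have h1 : ContinuousAt (fun x : ℝ => x ^ (2 * l + 3)) 0 :=
          Real.continuousAt_rpow_const 0 (2 * l + 3) (Or.inr (by linarith))
        have h2 : Tendsto (fun x : ℝ => x ^ (2 * l + 3)) (nhdsWithin 0 (Set.Ioi 0)) (nhds 0) := by
          have := h1.tendsto.mono_left (nhdsWithin_le_nhds (s := Set.Ioi (0:ℝ)))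
          rwa [Real.zero_rpow (by linarith : 2 * l + 3 ≠ 0)] at this
        simpa using h2.div_const (2 ^ (l + 1))
      exact Tendsto.congr' (eventuallyEq_of_mem self_mem_nhdsWithin
        fun x hx => (hcongr x hx).symm) hmain
    have h1 : Tendsto (fun x : ℝ => ((x ^ l * (x / 2) ^ (l + 1) * x ^ 2 : ℝ) : ℂ))
        (nhdsWithin 0 (Set.Ioi 0)) (nhds 0) := by
      have := (Complex.continuous_ofReal.tendsto 0).comp hreal
      simpa [Function.comp_def] using this
    have h2 : Tendsto (fun x : ℝ => (-2 * (Real.sqrt Real.pi : ℂ)) * deriv F ((x : ℂ) ^ 2))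
        (nhdsWithin 0 (Set.Ioi 0)) (nhds ((-2 * (Real.sqrt Real.pi : ℂ)) * deriv F 0)) := by
      have hsq : Tendsto (fun x : ℝ => ((x : ℂ)) ^ 2) (nhdsWithin 0 (Set.Ioi 0)) (nhds 0) := by
        have := ((Complex.continuous_ofReal.pow 2).tendsto 0).mono_left
          (nhdsWithin_le_nhds (s := Set.Ioi (0:ℝ)))
        convert this using 2 <;> simp
      exact tendsto_const_nhds.mul (hcontF'.tendsto.comp hsq)
    have := h1.mul h2
    simpa using this
end

section
/- Let l ≥ −1/2, let 1 < s < ∞ with conjugate exponent r (1/s + 1/r = 1), let q̃ ∈ L_s(0,1), and let C > 0. Suppose F : ℂ × (0,1) → ℂ is such that x ↦ F(w,x) is measurable for each w ∈ ℂ, and for all w ∈ ℂ and all x ∈ (0,1): |F(w,x)| ≤ C·( x/(1+|w|·x) )^{l+1} · e^{|Im w|·x} · ∫₀^x |q̃(y)|/(1+|w|·y) dy. Then there exists a constant C' > 0 such that for all w ∈ ℂ with |w| ≥ 1: ( ∫₀¹ |F(w,x)|² dx )^{1/2} ≤ C' · e^{|Im w|} · |w|^{−(l+1)−1/r}. -/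
open MeasureTheory Filter Set

set_option maxHeartbeats 2000000 in
/-- Lemma 4.1 of the paper, case `1 < s < ∞`: if `F(w,·)` satisfies the
pointwise bound inherited from `ξ(w²,·) - ξ_l(w²,·)`, then its `L²(0,1)` norm
is `O(e^{|Im w|} |w|^{-(l+1)-1/r})`. -/
theorem statement10 (l s r : ℝ) (hl : -1/2 ≤ l) (hs : 1 < s)
    (hr : 1/s + 1/r = 1)
    (q : ℝ → ℝ) (hqm : Measurable q)
    (hq : IntegrableOn (fun x : ℝ => |q x| ^ s) (Set.Ioo 0 1))
    (C : ℝ) (hC : 0 < C) (F : ℂ → ℝ → ℂ)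
    (hFm : ∀ w : ℂ, AEStronglyMeasurable (F w) (volume.restrict (Set.Ioo (0 : ℝ) 1)))
    (hF : ∀ w : ℂ, ∀ x ∈ Set.Ioo (0 : ℝ) 1,
      ‖F w x‖ ≤ C * (x / (1 + ‖w‖ * x)) ^ (l + 1) *
        Real.exp (|w.im| * x) *
          ∫ y in Set.Ioo (0 : ℝ) x, |q y| / (1 + ‖w‖ * y)) :
    ∃ C' : ℝ, 0 < C' ∧ ∀ w : ℂ, 1 ≤ ‖w‖ →
      (∫ x in Set.Ioo (0 : ℝ) 1, ‖F w x‖ ^ 2) ^ (1/2 : ℝ) ≤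
        C' * Real.exp |w.im| * ‖w‖ ^ (-(l + 1) - 1/r) := by
  have hs0 : (0:ℝ) < s := lt_trans one_pos hs
  have hrinv : 0 < 1/r := by
    have h1s : 1/s < 1 := by rw [div_lt_one hs0]; exact hs
    have : 1/r = 1 - 1/s := by linarith
    rw [this]; linarith
  have hr0 : 0 < r := one_div_pos.mp hrinv
  have hr1 : 1 < r := by
    have : 1/r < 1 := by
      have h1s : 0 < 1/s := by positivity
      linarith
    rwa [div_lt_one hr0] at this
  have hpq : Real.HolderConjugate s r :=
    Real.holderConjugate_iff.mpr ⟨hs, by rw [inv_eq_one_div, inv_eq_one_div]; exact hr⟩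
  have hfin : IsFiniteMeasure (volume.restrict (Set.Ioo (0:ℝ) 1)) := by
    constructor
    rw [Measure.restrict_apply_univ]
    simp [Real.volume_Ioo]
  -- q is in L^s on (0,1)
  have hmemq : MemLp q (ENNReal.ofReal s) (volume.restrict (Set.Ioo (0:ℝ) 1)) := by
    rw [← memLp_norm_rpow_iff (q := ENNReal.ofReal s) (hqm.aestronglyMeasurable)
      (by simp [ENNReal.ofReal_eq_zero]; linarith) ENNReal.ofReal_ne_top]
    rw [ENNReal.div_self (by simp [ENNReal.ofReal_eq_zero]; linarith) ENNReal.ofReal_ne_top]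
    rw [memLp_one_iff_integrable]
    simpa [Real.norm_eq_abs, ENNReal.toReal_ofReal hs0.le] using hq.integrable
  have hmemq' : MemLp (fun y => |q y|) (ENNReal.ofReal s)
      (volume.restrict (Set.Ioo (0:ℝ) 1)) := by
    simpa [Real.norm_eq_abs] using hmemq.norm
  have hqi : IntegrableOn (fun y => |q y|) (Set.Ioo (0:ℝ) 1) := by
    have := hmemq.integrable (by
      rw [← ENNReal.ofReal_one]
      exact ENNReal.ofReal_le_ofReal hs.le)
    exact this.abs
  set Q : ℝ := (∫ x in Set.Ioo (0:ℝ) 1, |q x| ^ s) ^ (1/s) with hQdef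
  have hQ : 0 ≤ Q :=
    Real.rpow_nonneg (integral_nonneg fun x => Real.rpow_nonneg (abs_nonneg _) s) _
  set K : ℝ := ((r - 1)⁻¹) ^ (1/r) with hKdef
  have hK : 0 < K := Real.rpow_pos_of_pos (inv_pos.mpr (by linarith)) _
  refine ⟨C * (Q + 1) * K, by positivity, ?_⟩
  intro w ha
  set a : ℝ := ‖w‖ with hadef
  have h0a : (0:ℝ) < a := lt_of_lt_of_le one_pos ha
  set M : ℝ := C * (Q + 1) * K * Real.exp |w.im| * a ^ (-(l + 1) - 1/r) with hMdef
  have hM : 0 ≤ M := by positivity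
  -- the elementary integral estimate
  have hint : ∫ y in Set.Ioo (0:ℝ) 1, ((1 + a*y)⁻¹) ^ r ≤ (r-1)⁻¹ * a⁻¹ := by
    have e1 : ∫ y in Set.Ioo (0:ℝ) 1, ((1 + a*y)⁻¹) ^ r
        = ∫ y in (0:ℝ)..1, ((1 + a*y)⁻¹) ^ r := by
      rw [intervalIntegral.integral_of_le zero_le_one, integral_Ioc_eq_integral_Ioo]
    have e2 : ∫ y in (0:ℝ)..1, ((1 + a*y)⁻¹) ^ r
        = ∫ y in (0:ℝ)..1, (a*y + 1) ^ (-r) := by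
      apply intervalIntegral.integral_congr
      intro y hy
      rw [Set.uIcc_of_le zero_le_one] at hy
      have hy0 : 0 ≤ a * y := mul_nonneg h0a.le hy.1
      have h1 : (0:ℝ) < 1 + a*y := by linarith
      show (1 + a*y)⁻¹ ^ r = (a*y + 1) ^ (-r)
      rw [Real.rpow_neg (by linarith), ← Real.inv_rpow (by linarith), add_comm]
    have e3 : ∫ y in (0:ℝ)..1, (a*y + 1) ^ (-r)
        = a⁻¹ * (((a+1) ^ (-r+1) - 1 ^ (-r+1)) / (-r+1)) := by
      rw [intervalIntegral.integral_comp_mul_add (fun u => u ^ (-r)) h0a.ne' 1]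
      rw [mul_zero, zero_add, mul_one, smul_eq_mul]
      congr 1
      apply integral_rpow
      right
      constructor
      · intro h; rw [neg_eq_iff_eq_neg] at h; linarith
      · rw [Set.uIcc_of_le (by linarith : (1:ℝ) ≤ a + 1)]
        intro h; exact absurd h.1 (by norm_num)
    rw [e1, e2, e3]
    have ht : (0:ℝ) ≤ (a+1) ^ (-r+1) := Real.rpow_nonneg (by linarith) _
    rw [Real.one_rpow]
    have key : ((a+1) ^ (-r+1) - 1) / (-r+1) ≤ (r-1)⁻¹ := by
      have h1 : ((a+1) ^ (-r+1) - 1) / (-r+1) = (1 - (a+1) ^ (-r+1)) / (r-1) := by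
        rw [div_eq_div_iff (by linarith) (by linarith)]; ring
      rw [h1, div_le_iff₀ (by linarith : (0:ℝ) < r - 1),
        inv_mul_cancel₀ (by linarith : r - 1 ≠ 0)]
      linarith
    calc a⁻¹ * (((a+1) ^ (-r+1) - 1) / (-r+1)) ≤ a⁻¹ * (r-1)⁻¹ := by
          apply mul_le_mul_of_nonneg_left key (by positivity)
      _ = (r-1)⁻¹ * a⁻¹ := mul_comm _ _
  -- integrability of the Hölder product
  have hmeas_g : AEStronglyMeasurable (fun y : ℝ => (1 + a*y)⁻¹)
      (volume.restrict (Set.Ioo (0:ℝ) 1)) :=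
    ((measurable_const.add (measurable_const.mul measurable_id)).inv).aestronglyMeasurable
  have hg_bound : ∀ᵐ y ∂(volume.restrict (Set.Ioo (0:ℝ) 1)),
      ‖(1 + a*y)⁻¹‖ ≤ 1 := by
    filter_upwards [ae_restrict_mem measurableSet_Ioo] with y hy
    have h1 : (1:ℝ) ≤ 1 + a*y := by nlinarith [hy.1]
    rw [Real.norm_eq_abs, abs_of_nonneg (by positivity)]
    exact inv_le_one_of_one_le₀ h1
  have hmemg : MemLp (fun y : ℝ => (1 + a*y)⁻¹) (ENNReal.ofReal r)
      (volume.restrict (Set.Ioo (0:ℝ) 1)) :=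
    MemLp.of_bound hmeas_g 1 hg_bound
  have hInt : IntegrableOn (fun y : ℝ => |q y| * (1 + a*y)⁻¹) (Set.Ioo (0:ℝ) 1) := by
    apply hqi.mono' (hqm.abs.aestronglyMeasurable.mul hmeas_g)
    filter_upwards [ae_restrict_mem measurableSet_Ioo] with y hy
    have h1 : (1:ℝ) ≤ 1 + a*y := by nlinarith [hy.1]
    show ‖|q y| * (1 + a*y)⁻¹‖ ≤ |q y|
    rw [Real.norm_eq_abs, abs_mul, abs_abs,
      abs_of_nonneg (inv_nonneg.mpr (by linarith : (0:ℝ) ≤ 1 + a*y))]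
    calc |q y| * (1 + a*y)⁻¹ ≤ |q y| * 1 :=
          mul_le_mul_of_nonneg_left (inv_le_one_of_one_le₀ h1) (abs_nonneg _)
      _ = |q y| := mul_one _
  -- Hölder estimate
  have hHolder : ∫ y in Set.Ioo (0:ℝ) 1, |q y| * (1 + a*y)⁻¹
      ≤ Q * (K * (a⁻¹) ^ (1/r)) := by
    have h1 := MeasureTheory.integral_mul_le_Lp_mul_Lq_of_nonneg
      (μ := volume.restrict (Set.Ioo (0:ℝ) 1)) hpq
      (ae_of_all _ fun y => abs_nonneg (q y))
      (by filter_upwards [ae_restrict_mem measurableSet_Ioo] with y hy using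
        inv_nonneg.mpr (by nlinarith [hy.1, mul_nonneg h0a.le hy.1.le])) hmemq' hmemg
    refine le_trans h1 ?_
    rw [← hQdef]
    apply mul_le_mul_of_nonneg_left _ hQ
    have h2 : (∫ y in Set.Ioo (0:ℝ) 1, ((1 + a*y)⁻¹) ^ r) ^ (1/r)
        ≤ ((r-1)⁻¹ * a⁻¹) ^ (1/r) :=
      Real.rpow_le_rpow (setIntegral_nonneg measurableSet_Ioo fun y hy =>
          Real.rpow_nonneg (inv_nonneg.mpr
            (by nlinarith [hy.1, mul_nonneg h0a.le hy.1.le] : (0:ℝ) ≤ 1 + a*y)) r)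
        hint (le_of_lt hrinv)
    refine le_trans h2 ?_
    rw [Real.mul_rpow (inv_nonneg.mpr (by linarith : (0:ℝ) ≤ r - 1))
      (inv_nonneg.mpr h0a.le), hKdef]
  -- pointwise bound on F
  have hpt : ∀ x ∈ Set.Ioo (0:ℝ) 1, ‖F w x‖ ≤ M := by
    intro x hx
    have hx0 : 0 < x := hx.1
    have hx1 : x < 1 := hx.2
    have hden : (0:ℝ) < 1 + a*x := by nlinarith
    have hA : (x / (1 + a*x)) ^ (l+1) ≤ (a⁻¹) ^ (l+1) := by
      apply Real.rpow_le_rpow (div_nonneg hx0.le hden.le) _ (by linarith : (0:ℝ) ≤ l + 1)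
      rw [div_le_iff₀ hden]
      have hinva : (0:ℝ) ≤ a⁻¹ := inv_nonneg.mpr h0a.le
      have heq : a⁻¹ * (1 + a*x) = a⁻¹ + x := by field_simp
      rw [heq]
      linarith
    have hE : Real.exp (|w.im| * x) ≤ Real.exp |w.im| := by
      apply Real.exp_le_exp.mpr
      nlinarith [abs_nonneg w.im, hx0, hx1]
    have hI : ∫ y in Set.Ioo (0:ℝ) x, |q y| / (1 + a*y)
        ≤ (Q + 1) * (K * (a⁻¹) ^ (1/r)) := by
      have step1 : ∫ y in Set.Ioo (0:ℝ) x, |q y| / (1 + a*y)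
          ≤ ∫ y in Set.Ioo (0:ℝ) 1, |q y| / (1 + a*y) := by
        simp only [div_eq_mul_inv]
        apply setIntegral_mono_set hInt
        · filter_upwards [ae_restrict_mem measurableSet_Ioo] with y hy
          have : (1:ℝ) ≤ 1 + a*y := by nlinarith [hy.1]
          positivity
        · exact (Set.Ioo_subset_Ioo_right hx1.le).eventuallyLE
      refine le_trans step1 ?_
      simp only [div_eq_mul_inv]
      refine le_trans hHolder ?_
      apply mul_le_mul_of_nonneg_right (by linarith)
        (mul_nonneg hK.le (Real.rpow_nonneg (inv_nonneg.mpr h0a.le) _))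
    have hIpos : 0 ≤ ∫ y in Set.Ioo (0:ℝ) x, |q y| / (1 + a*y) :=
      setIntegral_nonneg measurableSet_Ioo fun y hy =>
        div_nonneg (abs_nonneg _) (by nlinarith [hy.1, mul_nonneg h0a.le hy.1.le])
    have hpow : (a⁻¹) ^ (l+1) * (a⁻¹) ^ (1/r) = a ^ (-(l+1) - 1/r) := by
      rw [← Real.rpow_add (inv_pos.mpr h0a), Real.inv_rpow h0a.le,
        ← Real.rpow_neg h0a.le]
      congr 1; ring
    calc ‖F w x‖ ≤ C * (x / (1 + a*x)) ^ (l+1) * Real.exp (|w.im| * x) *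
          ∫ y in Set.Ioo (0:ℝ) x, |q y| / (1 + a*y) := hF w x hx
      _ ≤ C * (a⁻¹) ^ (l+1) * Real.exp |w.im| *
          ((Q + 1) * (K * (a⁻¹) ^ (1/r))) := by
          apply mul_le_mul (by
            apply mul_le_mul (by
              exact mul_le_mul_of_nonneg_left hA hC.le) hE (Real.exp_pos _).le
              (by positivity)) hI hIpos (by positivity)
      _ = M := by rw [hMdef, ← hpow]; ring
  -- conclude
  have hFsq_int : IntegrableOn (fun x : ℝ => ‖F w x‖ ^ 2) (Set.Ioo (0:ℝ) 1) := by
    have hconst : IntegrableOn (fun _ : ℝ => M ^ 2) (Set.Ioo (0:ℝ) 1) := by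
      apply (integrableOn_const_iff (C := M ^ 2)).mpr
      right
      simp [Real.volume_Ioo]
    apply hconst.mono' (((hFm w).norm.aemeasurable.pow_const 2).aestronglyMeasurable)
    filter_upwards [ae_restrict_mem measurableSet_Ioo] with x hx
    rw [Real.norm_eq_abs, abs_of_nonneg (by positivity)]
    exact pow_le_pow_left₀ (norm_nonneg _) (hpt x hx) 2
  have hintle : ∫ x in Set.Ioo (0:ℝ) 1, ‖F w x‖ ^ 2 ≤ M ^ 2 := by
    have hconst : IntegrableOn (fun _ : ℝ => M ^ 2) (Set.Ioo (0:ℝ) 1) := by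
      apply (integrableOn_const_iff (C := M ^ 2)).mpr
      right
      simp [Real.volume_Ioo]
    calc ∫ x in Set.Ioo (0:ℝ) 1, ‖F w x‖ ^ 2
        ≤ ∫ _ in Set.Ioo (0:ℝ) 1, M ^ 2 :=
          setIntegral_mono_on hFsq_int hconst measurableSet_Ioo
            (fun x hx => pow_le_pow_left₀ (norm_nonneg _) (hpt x hx) 2)
      _ = M ^ 2 := by simp [Real.volume_Ioo]
  have hfinal : (∫ x in Set.Ioo (0:ℝ) 1, ‖F w x‖ ^ 2) ^ (1/2 : ℝ) ≤ M := by
    have h1 : (∫ x in Set.Ioo (0:ℝ) 1, ‖F w x‖ ^ 2) ^ (1/2 : ℝ)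
        ≤ (M ^ 2) ^ (1/2 : ℝ) :=
      Real.rpow_le_rpow (integral_nonneg fun x => by positivity) hintle (by norm_num)
    refine le_trans h1 ?_
    rw [← Real.rpow_natCast M 2, ← Real.rpow_mul hM]
    norm_num
  exact le_trans hfinal (le_of_eq (by rw [hMdef]))
end
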